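/- Subformula property for long normal proofs: consider a derivation of ⊢ M : φ in first-order intuitionistic logic where M is in long normal form. Then every judgement Γ ⊢ N : ψ occurring in this derivation has the property that for each formula ξ occurring in Γ, and also for ψ itself, there is a subformula ξ′ of φ such that ξ = ξ′[X₁:=Y₁,…,Xₙ:=Yₙ], where FV(ξ′) = {X₁,…,Xₙ} and Y₁,…,Yₙ are some first-order variables. -/
import Mathlib

set_option autoImplicit true

/-! ### Formulas of first-order intuitionistic logic -/

inductive Formula : Type where
  | atom : ℕ → List ℕ → Formula
  | conj : Formula → Formula → Formula
  | disj : Formula → Formula → Formula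
  | imp  : Formula → Formula → Formula
  | all  : ℕ → Formula → Formula
  | ex   : ℕ → Formula → Formula
  | bot  : Formula
  deriving DecidableEq

namespace Formula

/-- Free first-order variables of a formula. -/
def fv : Formula → Set ℕ
  | atom _ args => {X | X ∈ args}
  | conj φ ψ => φ.fv ∪ ψ.fv
  | disj φ ψ => φ.fv ∪ ψ.fv
  | imp φ ψ => φ.fv ∪ ψ.fv
  | all X φ => φ.fv \ {X}
  | ex X φ => φ.fv \ {X}
  | bot => ∅

/-- Bound first-order variables of a formula. -/
def bv : Formula → Set ℕ
  | atom _ _ => ∅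
  | conj φ ψ => φ.bv ∪ ψ.bv
  | disj φ ψ => φ.bv ∪ ψ.bv
  | imp φ ψ => φ.bv ∪ ψ.bv
  | all X φ => insert X φ.bv
  | ex X φ => insert X φ.bv
  | bot => ∅

/-- Renaming of the free occurrences of `X` to `Y`: the substitution `φ[X := Y]`. -/
def renameFree : Formula → ℕ → ℕ → Formula
  | atom P args, X, Y => atom P (args.map fun Z => if Z = X then Y else Z)
  | conj φ ψ, X, Y => conj (φ.renameFree X Y) (ψ.renameFree X Y)
  | disj φ ψ, X, Y => disj (φ.renameFree X Y) (ψ.renameFree X Y)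
  | imp φ ψ, X, Y => imp (φ.renameFree X Y) (ψ.renameFree X Y)
  | all Z φ, X, Y => if Z = X then all Z φ else all Z (φ.renameFree X Y)
  | ex Z φ, X, Y => if Z = X then ex Z φ else ex Z (φ.renameFree X Y)
  | bot, _, _ => bot

end Formula

/-! ### Proof terms -/

inductive Term : Type where
  | var  : ℕ → Term                                      -- x
  | pair : Term → Term → Term                            -- ⟨M₁, M₂⟩
  | fst  : Term → Term                                   -- π₁ M
  | snd  : Term → Term                                   -- π₂ M
  | inl  : Formula → Term → Term                         -- in₁^{φ₁∨φ₂} M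
  | inr  : Formula → Term → Term                         -- in₂^{φ₁∨φ₂} M
  | case : Term → ℕ → Formula → Term → ℕ → Formula → Term → Term
      -- case M of [x:φ₁] N₁ or [y:φ₂] N₂
  | lam  : ℕ → Formula → Term → Term                     -- λx:φ.M
  | app  : Term → Term → Term                            -- M₁ M₂
  | tlam : ℕ → Term → Term                               -- λX M
  | tapp : Term → ℕ → Term                               -- M Y
  | pack : Term → ℕ → ℕ → Formula → Term                 -- pack M, Y to X.φ
  | lett : ℕ → Formula → Term → ℕ → Term → Term          -- let x:φ be M₁:∃X.φ in M₂
  | efq  : Formula → Term → Term                         -- ⊥⊥_φ M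
  deriving DecidableEq

/-- Environments: finite sets (lists) of assignments of formulas to proof variables. -/
abbrev Ctx := List (ℕ × Formula)

/-- Free first-order variables of an environment. -/
def ctxFV (Γ : Ctx) : Set ℕ := {X | ∃ p ∈ Γ, X ∈ p.2.fv}

/-! ### The natural deduction rules of first-order intuitionistic logic -/

inductive Typing : Ctx → Term → Formula → Prop where
  | var : (x, φ) ∈ Γ → Typing Γ (.var x) φ
  | conjI : Typing Γ M φ → Typing Γ N ψ → Typing Γ (.pair M N) (.conj φ ψ)
  | conjE1 : Typing Γ M (.conj φ ψ) → Typing Γ (.fst M) φ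
  | conjE2 : Typing Γ M (.conj φ ψ) → Typing Γ (.snd M) ψ
  | disjI1 : Typing Γ M φ → Typing Γ (.inl (.disj φ ψ) M) (.disj φ ψ)
  | disjI2 : Typing Γ N ψ → Typing Γ (.inr (.disj φ ψ) N) (.disj φ ψ)
  | disjE : Typing Γ M (.disj φ₁ φ₂) → Typing ((x, φ₁) :: Γ) N₁ ψ →
      Typing ((y, φ₂) :: Γ) N₂ ψ → Typing Γ (.case M x φ₁ N₁ y φ₂ N₂) ψ
  | impI : Typing ((x, φ) :: Γ) M ψ → Typing Γ (.lam x φ M) (.imp φ ψ)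
  | impE : Typing Γ M (.imp φ ψ) → Typing Γ N φ → Typing Γ (.app M N) ψ
  | allI : Typing Γ M φ → X ∉ ctxFV Γ → Typing Γ (.tlam X M) (.all X φ)
  | allE : Typing Γ M (.all X φ) → Y ∉ φ.bv → Typing Γ (.tapp M Y) (φ.renameFree X Y)
  | exI : Typing Γ M (φ.renameFree X Y) → Y ∉ φ.bv → Typing Γ (.pack M Y X φ) (.ex X φ)
  | exE : Typing Γ M (.ex X φ) → Typing ((x, φ) :: Γ) N ψ →
      X ∉ ctxFV Γ → X ∉ ψ.fv → Typing Γ (.lett x φ M X N) ψ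
  | botE : Typing Γ M .bot → Typing Γ (.efq φ M) φ
/-! ### Long normal forms -/

/-- Pseudo-atom formulas: atoms, existential formulas and disjunctions. -/
inductive PseudoAtom : Formula → Prop where
  | atom : PseudoAtom (.atom P args)
  | disj : PseudoAtom (.disj φ ψ)
  | ex   : PseudoAtom (.ex X φ)

mutual
  /-- `IsQLE Γ P φ`: `P` is a quasi-long proper eliminator of type `φ` in the
  environment `Γ`, i.e. a proper eliminator all of whose arguments are (long normal
  forms) of pseudo-atom type. -/
  inductive IsQLE : Ctx → Term → Formula → Prop where
    | var : (x, φ) ∈ Γ → IsQLE Γ (.var x) φ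
    | app : IsQLE Γ P (.imp φ ψ) → PseudoAtom φ → IsLnf Γ N φ → IsQLE Γ (.app P N) ψ
    | fst : IsQLE Γ P (.conj φ ψ) → IsQLE Γ (.fst P) φ
    | snd : IsQLE Γ P (.conj φ ψ) → IsQLE Γ (.snd P) ψ
    | tapp : IsQLE Γ P (.all X φ) → Y ∉ φ.bv → IsQLE Γ (.tapp P Y) (φ.renameFree X Y)

  /-- `IsLnf Γ N φ`: `N` is a long normal form of type `φ` in the environment `Γ`. -/
  inductive IsLnf : Ctx → Term → Formula → Prop where
    | qle : IsQLE Γ P (.atom c args) → IsLnf Γ P (.atom c args)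
    | lam : IsLnf ((x, φ) :: Γ) N ψ → IsLnf Γ (.lam x φ N) (.imp φ ψ)
    | pair : IsLnf Γ N₁ φ → IsLnf Γ N₂ ψ → IsLnf Γ (.pair N₁ N₂) (.conj φ ψ)
    | inl : IsLnf Γ N φ → IsLnf Γ (.inl (.disj φ ψ) N) (.disj φ ψ)
    | inr : IsLnf Γ N ψ → IsLnf Γ (.inr (.disj φ ψ) N) (.disj φ ψ)
    | tlam : IsLnf Γ N φ → X ∉ ctxFV Γ → IsLnf Γ (.tlam X N) (.all X φ)
    | pack : IsLnf Γ N (φ.renameFree X Y) → Y ∉ φ.bv → IsLnf Γ (.pack N Y X φ) (.ex X φ)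
    | case : IsQLE Γ P (.disj φ₁ φ₂) → IsLnf ((x, φ₁) :: Γ) N₁ ψ →
        IsLnf ((y, φ₂) :: Γ) N₂ ψ → IsLnf Γ (.case P x φ₁ N₁ y φ₂ N₂) ψ
    | efq : IsQLE Γ P .bot → IsLnf Γ (.efq ψ P) ψ
    | lett : IsQLE Γ P (.ex X φ) → IsLnf ((x, φ) :: Γ) N ψ → X ∉ ctxFV Γ → X ∉ ψ.fv →
        IsLnf Γ (.lett x φ P X N) ψ
end
/-! ### Derivations as trees, judgements occurring in a derivation, subformulas -/

/-- Derivation trees of the natural deduction system. -/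
inductive Deriv : Ctx → Term → Formula → Type where
  | var {Γ : Ctx} {x : ℕ} {φ : Formula} : (x, φ) ∈ Γ → Deriv Γ (.var x) φ
  | conjI {Γ M N φ ψ} : Deriv Γ M φ → Deriv Γ N ψ → Deriv Γ (.pair M N) (.conj φ ψ)
  | conjE1 {Γ M φ ψ} : Deriv Γ M (.conj φ ψ) → Deriv Γ (.fst M) φ
  | conjE2 {Γ M φ ψ} : Deriv Γ M (.conj φ ψ) → Deriv Γ (.snd M) ψ
  | disjI1 {Γ M φ ψ} : Deriv Γ M φ → Deriv Γ (.inl (.disj φ ψ) M) (.disj φ ψ)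
  | disjI2 {Γ N φ ψ} : Deriv Γ N ψ → Deriv Γ (.inr (.disj φ ψ) N) (.disj φ ψ)
  | disjE {Γ M x y φ₁ φ₂ N₁ N₂ ψ} : Deriv Γ M (.disj φ₁ φ₂) →
      Deriv ((x, φ₁) :: Γ) N₁ ψ → Deriv ((y, φ₂) :: Γ) N₂ ψ →
      Deriv Γ (.case M x φ₁ N₁ y φ₂ N₂) ψ
  | impI {Γ x φ M ψ} : Deriv ((x, φ) :: Γ) M ψ → Deriv Γ (.lam x φ M) (.imp φ ψ)
  | impE {Γ M N φ ψ} : Deriv Γ M (.imp φ ψ) → Deriv Γ N φ → Deriv Γ (.app M N) ψ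
  | allI {Γ M X φ} : Deriv Γ M φ → X ∉ ctxFV Γ → Deriv Γ (.tlam X M) (.all X φ)
  | allE {Γ M X Y φ} : Deriv Γ M (.all X φ) → Y ∉ φ.bv →
      Deriv Γ (.tapp M Y) (φ.renameFree X Y)
  | exI {Γ M X Y φ} : Deriv Γ M (φ.renameFree X Y) → Y ∉ φ.bv →
      Deriv Γ (.pack M Y X φ) (.ex X φ)
  | exE {Γ M N x X φ ψ} : Deriv Γ M (.ex X φ) → Deriv ((x, φ) :: Γ) N ψ →
      X ∉ ctxFV Γ → X ∉ ψ.fv → Deriv Γ (.lett x φ M X N) ψ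
  | botE {Γ M φ} : Deriv Γ M .bot → Deriv Γ (.efq φ M) φ

/-- `InDeriv d j`: the judgement `j = (Γ, N, ψ)` occurs in the derivation `d`. -/
inductive InDeriv : {Γ : Ctx} → {M : Term} → {φ : Formula} →
    Deriv Γ M φ → Ctx × Term × Formula → Prop where
  | here {Γ M φ} (d : Deriv Γ M φ) : InDeriv d (Γ, M, φ)
  | conjI_l {Γ M N φ ψ j} (d₁ : Deriv Γ M φ) (d₂ : Deriv Γ N ψ) :
      InDeriv d₁ j → InDeriv (Deriv.conjI d₁ d₂) j
  | conjI_r {Γ M N φ ψ j} (d₁ : Deriv Γ M φ) (d₂ : Deriv Γ N ψ) :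
      InDeriv d₂ j → InDeriv (Deriv.conjI d₁ d₂) j
  | conjE1_p {Γ M φ ψ j} (d : Deriv Γ M (.conj φ ψ)) :
      InDeriv d j → InDeriv (Deriv.conjE1 d) j
  | conjE2_p {Γ M φ ψ j} (d : Deriv Γ M (.conj φ ψ)) :
      InDeriv d j → InDeriv (Deriv.conjE2 d) j
  | disjI1_p {Γ M φ ψ j} (d : Deriv Γ M φ) :
      InDeriv d j → InDeriv (Deriv.disjI1 (ψ := ψ) d) j
  | disjI2_p {Γ N φ ψ j} (d : Deriv Γ N ψ) :
      InDeriv d j → InDeriv (Deriv.disjI2 (φ := φ) d) j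
  | disjE_s {Γ M x y φ₁ φ₂ N₁ N₂ ψ j} (d : Deriv Γ M (.disj φ₁ φ₂))
      (d₁ : Deriv ((x, φ₁) :: Γ) N₁ ψ) (d₂ : Deriv ((y, φ₂) :: Γ) N₂ ψ) :
      InDeriv d j → InDeriv (Deriv.disjE d d₁ d₂) j
  | disjE_l {Γ M x y φ₁ φ₂ N₁ N₂ ψ j} (d : Deriv Γ M (.disj φ₁ φ₂))
      (d₁ : Deriv ((x, φ₁) :: Γ) N₁ ψ) (d₂ : Deriv ((y, φ₂) :: Γ) N₂ ψ) :
      InDeriv d₁ j → InDeriv (Deriv.disjE d d₁ d₂) j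
  | disjE_r {Γ M x y φ₁ φ₂ N₁ N₂ ψ j} (d : Deriv Γ M (.disj φ₁ φ₂))
      (d₁ : Deriv ((x, φ₁) :: Γ) N₁ ψ) (d₂ : Deriv ((y, φ₂) :: Γ) N₂ ψ) :
      InDeriv d₂ j → InDeriv (Deriv.disjE d d₁ d₂) j
  | impI_p {Γ x φ M ψ j} (d : Deriv ((x, φ) :: Γ) M ψ) :
      InDeriv d j → InDeriv (Deriv.impI d) j
  | impE_l {Γ M N φ ψ j} (d₁ : Deriv Γ M (.imp φ ψ)) (d₂ : Deriv Γ N φ) :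
      InDeriv d₁ j → InDeriv (Deriv.impE d₁ d₂) j
  | impE_r {Γ M N φ ψ j} (d₁ : Deriv Γ M (.imp φ ψ)) (d₂ : Deriv Γ N φ) :
      InDeriv d₂ j → InDeriv (Deriv.impE d₁ d₂) j
  | allI_p {Γ M X φ j} (d : Deriv Γ M φ) (h : X ∉ ctxFV Γ) :
      InDeriv d j → InDeriv (Deriv.allI d h) j
  | allE_p {Γ M X Y φ j} (d : Deriv Γ M (.all X φ)) (h : Y ∉ φ.bv) :
      InDeriv d j → InDeriv (Deriv.allE d h) j
  | exI_p {Γ : Ctx} {M : Term} {X Y : ℕ} {φ : Formula} {j}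
      (d : Deriv Γ M (φ.renameFree X Y)) (h : Y ∉ φ.bv) :
      InDeriv d j → InDeriv (Deriv.exI d h) j
  | exE_l {Γ M N x X φ ψ j} (d₁ : Deriv Γ M (.ex X φ)) (d₂ : Deriv ((x, φ) :: Γ) N ψ)
      (h₁ : X ∉ ctxFV Γ) (h₂ : X ∉ ψ.fv) :
      InDeriv d₁ j → InDeriv (Deriv.exE d₁ d₂ h₁ h₂) j
  | exE_r {Γ M N x X φ ψ j} (d₁ : Deriv Γ M (.ex X φ)) (d₂ : Deriv ((x, φ) :: Γ) N ψ)
      (h₁ : X ∉ ctxFV Γ) (h₂ : X ∉ ψ.fv) :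
      InDeriv d₂ j → InDeriv (Deriv.exE d₁ d₂ h₁ h₂) j
  | botE_p {Γ M φ j} (d : Deriv Γ M .bot) :
      InDeriv d j → InDeriv (Deriv.botE (φ := φ) d) j

/-- The subformula relation. -/
inductive Subformula : Formula → Formula → Prop where
  | refl (φ) : Subformula φ φ
  | conj_l : Subformula ξ φ → Subformula ξ (.conj φ ψ)
  | conj_r : Subformula ξ ψ → Subformula ξ (.conj φ ψ)
  | disj_l : Subformula ξ φ → Subformula ξ (.disj φ ψ)
  | disj_r : Subformula ξ ψ → Subformula ξ (.disj φ ψ)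
  | imp_l : Subformula ξ φ → Subformula ξ (.imp φ ψ)
  | imp_r : Subformula ξ ψ → Subformula ξ (.imp φ ψ)
  | all : Subformula ξ φ → Subformula ξ (.all X φ)
  | ex : Subformula ξ φ → Subformula ξ (.ex X φ)

/-- Simultaneous renaming of the free first-order variables of a formula:
`renameAll σ ξ'` is `ξ'[X₁ := σ X₁, …, Xₙ := σ Xₙ]` where `FV(ξ') = {X₁, …, Xₙ}`. -/
def Formula.renameAll (σ : ℕ → ℕ) : Formula → Formula
  | .atom P args => .atom P (args.map σ)
  | .conj φ ψ => .conj (φ.renameAll σ) (ψ.renameAll σ)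
  | .disj φ ψ => .disj (φ.renameAll σ) (ψ.renameAll σ)
  | .imp φ ψ => .imp (φ.renameAll σ) (ψ.renameAll σ)
  | .all Z φ => .all Z (φ.renameAll (Function.update σ Z Z))
  | .ex Z φ => .ex Z (φ.renameAll (Function.update σ Z Z))
  | .bot => .bot

/-! ### Auxiliary machinery for the subformula property -/

section SubformulaAux

/-- Transitivity of the subformula relation. -/
theorem Subformula.trans' {a b c : Formula} (h₁ : Subformula a b) (h₂ : Subformula b c) :
    Subformula a c := by
  induction h₂ with
  | refl => exact h₁
  | conj_l _ ih => exact .conj_l ih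
  | conj_r _ ih => exact .conj_r ih
  | disj_l _ ih => exact .disj_l ih
  | disj_r _ ih => exact .disj_r ih
  | imp_l _ ih => exact .imp_l ih
  | imp_r _ ih => exact .imp_r ih
  | all _ ih => exact .all ih
  | ex _ ih => exact .ex ih

theorem renameAll_congr (ψ : Formula) : ∀ σ σ' : ℕ → ℕ, (∀ w ∈ ψ.fv, σ w = σ' w) →
    ψ.renameAll σ = ψ.renameAll σ' := by
  induction ψ with
  | atom P args =>
    intro σ σ' h
    simp only [Formula.renameAll, Formula.atom.injEq, true_and]
    exact List.map_congr_left fun a ha => h a (by simpa [Formula.fv] using ha)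
  | conj a b iha ihb =>
    intro σ σ' h
    simp only [Formula.renameAll, Formula.conj.injEq]
    exact ⟨iha _ _ fun w hw => h w (Or.inl hw), ihb _ _ fun w hw => h w (Or.inr hw)⟩
  | disj a b iha ihb =>
    intro σ σ' h
    simp only [Formula.renameAll, Formula.disj.injEq]
    exact ⟨iha _ _ fun w hw => h w (Or.inl hw), ihb _ _ fun w hw => h w (Or.inr hw)⟩
  | imp a b iha ihb =>
    intro σ σ' h
    simp only [Formula.renameAll, Formula.imp.injEq]
    exact ⟨iha _ _ fun w hw => h w (Or.inl hw), ihb _ _ fun w hw => h w (Or.inr hw)⟩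
  | all Z a ih =>
    intro σ σ' h
    simp only [Formula.renameAll, Formula.all.injEq, true_and]
    refine ih _ _ fun w hw => ?_
    rcases eq_or_ne w Z with rfl | hne
    · simp [Function.update_self]
    · simp only [Function.update_of_ne hne]
      exact h w ⟨hw, hne⟩
  | ex Z a ih =>
    intro σ σ' h
    simp only [Formula.renameAll, Formula.ex.injEq, true_and]
    refine ih _ _ fun w hw => ?_
    rcases eq_or_ne w Z with rfl | hne
    · simp [Function.update_self]
    · simp only [Function.update_of_ne hne]
      exact h w ⟨hw, hne⟩
  | bot => intro _ _ _; rfl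

theorem bv_renameAll (ψ : Formula) : ∀ σ : ℕ → ℕ, (ψ.renameAll σ).bv = ψ.bv := by
  induction ψ with
  | atom P args => intro σ; rfl
  | conj a b iha ihb => intro σ; simp [Formula.renameAll, Formula.bv, iha, ihb]
  | disj a b iha ihb => intro σ; simp [Formula.renameAll, Formula.bv, iha, ihb]
  | imp a b iha ihb => intro σ; simp [Formula.renameAll, Formula.bv, iha, ihb]
  | all Z a ih => intro σ; simp [Formula.renameAll, Formula.bv, ih]
  | ex Z a ih => intro σ; simp [Formula.renameAll, Formula.bv, ih]
  | bot => intro σ; rfl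

theorem renameAll_ident (ψ : Formula) : ∀ σ : ℕ → ℕ, (∀ w, σ w = w) → ψ.renameAll σ = ψ := by
  induction ψ with
  | atom P args =>
    intro σ h
    simp only [Formula.renameAll, Formula.atom.injEq, true_and]
    exact (List.map_congr_left fun a _ => h a).trans (List.map_id _)
  | conj a b iha ihb => intro σ h; simp [Formula.renameAll, iha _ h, ihb _ h]
  | disj a b iha ihb => intro σ h; simp [Formula.renameAll, iha _ h, ihb _ h]
  | imp a b iha ihb => intro σ h; simp [Formula.renameAll, iha _ h, ihb _ h]
  | all Z a ih =>
    intro σ h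
    simp only [Formula.renameAll, Formula.all.injEq, true_and]
    refine ih _ fun w => ?_
    rcases eq_or_ne w Z with rfl | hne
    · simp
    · simp [Function.update_of_ne hne, h w]
  | ex Z a ih =>
    intro σ h
    simp only [Formula.renameAll, Formula.ex.injEq, true_and]
    refine ih _ fun w => ?_
    rcases eq_or_ne w Z with rfl | hne
    · simp
    · simp [Function.update_of_ne hne, h w]
  | bot => intro _ _; rfl

/-- Key commutation lemma: renaming a single free variable in a simultaneously
renamed formula is again a simultaneous renaming, provided no capture occurs. -/
theorem renameFree_renameAll (ψ : Formula) :
    ∀ (σ : ℕ → ℕ) (X Y : ℕ), σ X = X →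
    (X ∈ ψ.bv → ∀ w ∈ ψ.fv, w ≠ X → σ w ≠ X) →
    (ψ.renameAll σ).renameFree X Y =
      ψ.renameAll (fun w => if σ w = X then Y else σ w) := by
  induction ψ with
  | atom P args =>
    intro σ X Y hX h
    simp only [Formula.renameAll, Formula.renameFree, List.map_map, Formula.atom.injEq, true_and]
    exact List.map_congr_left fun a _ => rfl
  | conj a b iha ihb =>
    intro σ X Y hX h
    simp only [Formula.renameAll, Formula.renameFree, Formula.conj.injEq]
    constructor
    · exact iha σ X Y hX fun hb w hw => h (Or.inl hb) w (Or.inl hw)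
    · exact ihb σ X Y hX fun hb w hw => h (Or.inr hb) w (Or.inr hw)
  | disj a b iha ihb =>
    intro σ X Y hX h
    simp only [Formula.renameAll, Formula.renameFree, Formula.disj.injEq]
    constructor
    · exact iha σ X Y hX fun hb w hw => h (Or.inl hb) w (Or.inl hw)
    · exact ihb σ X Y hX fun hb w hw => h (Or.inr hb) w (Or.inr hw)
  | imp a b iha ihb =>
    intro σ X Y hX h
    simp only [Formula.renameAll, Formula.renameFree, Formula.imp.injEq]
    constructor
    · exact iha σ X Y hX fun hb w hw => h (Or.inl hb) w (Or.inl hw)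
    · exact ihb σ X Y hX fun hb w hw => h (Or.inr hb) w (Or.inr hw)
  | all Z a ih =>
    intro σ X Y hX h
    rcases eq_or_ne Z X with rfl | hZX
    · simp only [Formula.renameAll, Formula.renameFree, if_pos rfl, if_true, Formula.all.injEq, true_and]
      refine renameAll_congr a _ _ fun w hw => ?_
      rcases eq_or_ne w Z with rfl | hne
      · simp
      · have hσ : σ w ≠ Z := h (Set.mem_insert _ _) w ⟨hw, hne⟩ hne
        simp [Function.update_of_ne hne, hσ]
    · simp only [Formula.renameAll, Formula.renameFree, if_neg hZX, Formula.all.injEq, true_and]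
      have hX' : Function.update σ Z Z X = X := by
        rw [Function.update_of_ne (Ne.symm hZX)]; exact hX
      have h' : X ∈ a.bv → ∀ w ∈ a.fv, w ≠ X → Function.update σ Z Z w ≠ X := by
        intro hb w hw hwX
        rcases eq_or_ne w Z with rfl | hne
        · simpa using hZX
        · rw [Function.update_of_ne hne]
          exact h (Set.mem_insert_of_mem _ hb) w ⟨hw, hne⟩ hwX
      rw [ih _ X Y hX' h']
      refine renameAll_congr a _ _ fun w _ => ?_
      rcases eq_or_ne w Z with rfl | hne
      · simp [hZX]
      · simp [Function.update_of_ne hne]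
  | ex Z a ih =>
    intro σ X Y hX h
    rcases eq_or_ne Z X with rfl | hZX
    · simp only [Formula.renameAll, Formula.renameFree, if_pos rfl, if_true, Formula.ex.injEq, true_and]
      refine renameAll_congr a _ _ fun w hw => ?_
      rcases eq_or_ne w Z with rfl | hne
      · simp
      · have hσ : σ w ≠ Z := h (Set.mem_insert _ _) w ⟨hw, hne⟩ hne
        simp [Function.update_of_ne hne, hσ]
    · simp only [Formula.renameAll, Formula.renameFree, if_neg hZX, Formula.ex.injEq, true_and]
      have hX' : Function.update σ Z Z X = X := by
        rw [Function.update_of_ne (Ne.symm hZX)]; exact hX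
      have h' : X ∈ a.bv → ∀ w ∈ a.fv, w ≠ X → Function.update σ Z Z w ≠ X := by
        intro hb w hw hwX
        rcases eq_or_ne w Z with rfl | hne
        · simpa using hZX
        · rw [Function.update_of_ne hne]
          exact h (Set.mem_insert_of_mem _ hb) w ⟨hw, hne⟩ hwX
      rw [ih _ X Y hX' h']
      refine renameAll_congr a _ _ fun w _ => ?_
      rcases eq_or_ne w Z with rfl | hne
      · simp [hZX]
      · simp [Function.update_of_ne hne]
  | bot => intro _ _ _ _ _; rfl

/-- `Good φt ξ`: `ξ` is a capture-free simultaneous renaming of a subformula of `φt`. -/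
def Good (φt ξ : Formula) : Prop :=
  ∃ ξ' σ, Subformula ξ' φt ∧ ξ = Formula.renameAll σ ξ' ∧
    ∀ w ∈ ξ'.fv, σ w ∈ ξ'.bv → σ w = w

theorem good_self (φt : Formula) : Good φt φt :=
  ⟨φt, id, .refl φt, (renameAll_ident φt id fun _ => rfl).symm, fun _ _ _ => rfl⟩

theorem good_conj {φt a b : Formula} (h : Good φt (.conj a b)) : Good φt a ∧ Good φt b := by
  obtain ⟨ξ', σ, hs, he, hnc⟩ := h
  cases ξ' <;> simp only [Formula.renameAll, reduceCtorEq] at he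
  case conj a' b' =>
    obtain ⟨ha, hb⟩ := Formula.conj.inj he
    exact ⟨⟨a', σ, (Subformula.conj_l (.refl a')).trans' hs, ha,
        fun w hw hbv => hnc w (Or.inl hw) (Or.inl hbv)⟩,
      ⟨b', σ, (Subformula.conj_r (.refl b')).trans' hs, hb,
        fun w hw hbv => hnc w (Or.inr hw) (Or.inr hbv)⟩⟩

theorem good_disj {φt a b : Formula} (h : Good φt (.disj a b)) : Good φt a ∧ Good φt b := by
  obtain ⟨ξ', σ, hs, he, hnc⟩ := h
  cases ξ' <;> simp only [Formula.renameAll, reduceCtorEq] at he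
  case disj a' b' =>
    obtain ⟨ha, hb⟩ := Formula.disj.inj he
    exact ⟨⟨a', σ, (Subformula.disj_l (.refl a')).trans' hs, ha,
        fun w hw hbv => hnc w (Or.inl hw) (Or.inl hbv)⟩,
      ⟨b', σ, (Subformula.disj_r (.refl b')).trans' hs, hb,
        fun w hw hbv => hnc w (Or.inr hw) (Or.inr hbv)⟩⟩

theorem good_imp {φt a b : Formula} (h : Good φt (.imp a b)) : Good φt a ∧ Good φt b := by
  obtain ⟨ξ', σ, hs, he, hnc⟩ := h
  cases ξ' <;> simp only [Formula.renameAll, reduceCtorEq] at he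
  case imp a' b' =>
    obtain ⟨ha, hb⟩ := Formula.imp.inj he
    exact ⟨⟨a', σ, (Subformula.imp_l (.refl a')).trans' hs, ha,
        fun w hw hbv => hnc w (Or.inl hw) (Or.inl hbv)⟩,
      ⟨b', σ, (Subformula.imp_r (.refl b')).trans' hs, hb,
        fun w hw hbv => hnc w (Or.inr hw) (Or.inr hbv)⟩⟩

theorem good_all_body {φt a : Formula} {X : ℕ} (h : Good φt (.all X a)) : Good φt a := by
  obtain ⟨ξ', σ, hs, he, hnc⟩ := h
  cases ξ' <;> simp only [Formula.renameAll, reduceCtorEq] at he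
  case all Z a' =>
    obtain ⟨hZ, ha⟩ := Formula.all.inj he
    subst hZ
    refine ⟨a', Function.update σ X X, (Subformula.all (.refl a')).trans' hs, ha, ?_⟩
    intro w hw hbv
    rcases eq_or_ne w X with rfl | hne
    · simp
    · rw [Function.update_of_ne hne] at hbv ⊢
      exact hnc w ⟨hw, hne⟩ (Set.mem_insert_of_mem _ hbv)

theorem good_ex_body {φt a : Formula} {X : ℕ} (h : Good φt (.ex X a)) : Good φt a := by
  obtain ⟨ξ', σ, hs, he, hnc⟩ := h
  cases ξ' <;> simp only [Formula.renameAll, reduceCtorEq] at he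
  case ex Z a' =>
    obtain ⟨hZ, ha⟩ := Formula.ex.inj he
    subst hZ
    refine ⟨a', Function.update σ X X, (Subformula.ex (.refl a')).trans' hs, ha, ?_⟩
    intro w hw hbv
    rcases eq_or_ne w X with rfl | hne
    · simp
    · rw [Function.update_of_ne hne] at hbv ⊢
      exact hnc w ⟨hw, hne⟩ (Set.mem_insert_of_mem _ hbv)

theorem good_all_inst {φt a : Formula} {X Y : ℕ} (h : Good φt (.all X a)) (hY : Y ∉ a.bv) :
    Good φt (a.renameFree X Y) := by
  obtain ⟨ξ', σ, hs, he, hnc⟩ := h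
  cases ξ' <;> simp only [Formula.renameAll, reduceCtorEq] at he
  case all Z a' =>
    obtain ⟨hZ, ha⟩ := Formula.all.inj he
    subst hZ
    set σ₁ := Function.update σ X X with hσ₁
    have hX1 : σ₁ X = X := by simp [hσ₁]
    have hcond : X ∈ a'.bv → ∀ w ∈ a'.fv, w ≠ X → σ₁ w ≠ X := by
      intro hb w hw hne
      rw [hσ₁, Function.update_of_ne hne]
      intro hσw
      have hww : σ w = w := hnc w ⟨hw, hne⟩ (by rw [hσw]; exact Set.mem_insert _ _)
      exact hne (hww.symm.trans hσw)
    have hbva : a.bv = a'.bv := by rw [ha]; exact bv_renameAll a' σ₁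
    refine ⟨a', fun w => if σ₁ w = X then Y else σ₁ w,
      (Subformula.all (.refl a')).trans' hs, ?_, ?_⟩
    · rw [ha]; exact renameFree_renameAll a' σ₁ X Y hX1 hcond
    · intro w hw hbv
      by_cases hc : σ₁ w = X
      · simp only [if_pos hc] at hbv ⊢
        exact absurd (hbva ▸ hbv) hY
      · simp only [if_neg hc] at hbv ⊢
        have hne : w ≠ X := fun hwe => hc (hwe ▸ hX1)
        rw [hσ₁, Function.update_of_ne hne] at hbv ⊢
        exact hnc w ⟨hw, hne⟩ (Set.mem_insert_of_mem _ hbv)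

theorem good_ex_inst {φt a : Formula} {X Y : ℕ} (h : Good φt (.ex X a)) (hY : Y ∉ a.bv) :
    Good φt (a.renameFree X Y) := by
  obtain ⟨ξ', σ, hs, he, hnc⟩ := h
  cases ξ' <;> simp only [Formula.renameAll, reduceCtorEq] at he
  case ex Z a' =>
    obtain ⟨hZ, ha⟩ := Formula.ex.inj he
    subst hZ
    set σ₁ := Function.update σ X X with hσ₁
    have hX1 : σ₁ X = X := by simp [hσ₁]
    have hcond : X ∈ a'.bv → ∀ w ∈ a'.fv, w ≠ X → σ₁ w ≠ X := by
      intro hb w hw hne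
      rw [hσ₁, Function.update_of_ne hne]
      intro hσw
      have hww : σ w = w := hnc w ⟨hw, hne⟩ (by rw [hσw]; exact Set.mem_insert _ _)
      exact hne (hww.symm.trans hσw)
    have hbva : a.bv = a'.bv := by rw [ha]; exact bv_renameAll a' σ₁
    refine ⟨a', fun w => if σ₁ w = X then Y else σ₁ w,
      (Subformula.ex (.refl a')).trans' hs, ?_, ?_⟩
    · rw [ha]; exact renameFree_renameAll a' σ₁ X Y hX1 hcond
    · intro w hw hbv
      by_cases hc : σ₁ w = X
      · simp only [if_pos hc] at hbv ⊢
        exact absurd (hbva ▸ hbv) hY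
      · simp only [if_neg hc] at hbv ⊢
        have hne : w ≠ X := fun hwe => hc (hwe ▸ hX1)
        rw [hσ₁, Function.update_of_ne hne] at hbv ⊢
        exact hnc w ⟨hw, hne⟩ (Set.mem_insert_of_mem _ hbv)

end SubformulaAux

/-! ### Syntactic normal forms -/

mutual
  /-- Neutral terms: eliminator spines headed by a variable. -/
  inductive NeTerm : Term → Prop where
    | var : NeTerm (.var x)
    | app : NeTerm P → NfTerm N → NeTerm (.app P N)
    | fst : NeTerm P → NeTerm (.fst P)
    | snd : NeTerm P → NeTerm (.snd P)
    | tapp : NeTerm P → NeTerm (.tapp P Y)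

  /-- Syntactic normal terms. -/
  inductive NfTerm : Term → Prop where
    | ne : NeTerm P → NfTerm P
    | lam : NfTerm N → NfTerm (.lam x φ N)
    | pair : NfTerm N₁ → NfTerm N₂ → NfTerm (.pair N₁ N₂)
    | inl : NfTerm N → NfTerm (.inl φ N)
    | inr : NfTerm N → NfTerm (.inr φ N)
    | tlam : NfTerm N → NfTerm (.tlam X N)
    | pack : NfTerm N → NfTerm (.pack N Y X φ)
    | case : NeTerm P → NfTerm N₁ → NfTerm N₂ → NfTerm (.case P x φ₁ N₁ y φ₂ N₂)
    | efq : NeTerm P → NfTerm (.efq φ P)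
    | lett : NeTerm P → NfTerm N → NfTerm (.lett x φ P X N)
end

/-- Long normal forms and quasi-long eliminators are syntactically normal. -/
theorem term_nf (M : Term) :
    (∀ Γ φ, IsQLE Γ M φ → NeTerm M) ∧ (∀ Γ φ, IsLnf Γ M φ → NfTerm M) := by
  induction M with
  | var x =>
    refine ⟨fun _ _ _ => .var, fun Γ φ h => ?_⟩
    cases h; exact .ne .var
  | pair M N ihM ihN =>
    refine ⟨fun _ _ h => (by cases h), fun Γ φ h => ?_⟩
    cases h with
    | qle h => cases h
    | pair h₁ h₂ => exact .pair (ihM.2 _ _ h₁) (ihN.2 _ _ h₂)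
  | fst M ihM =>
    have hA : ∀ Γ (φ : Formula), IsQLE Γ (.fst M) φ → NeTerm (.fst M) := by
      intro Γ φ h
      cases h with | fst h => exact .fst (ihM.1 _ _ h)
    exact ⟨hA, fun Γ φ h => by cases h with | qle h => exact .ne (hA _ _ h)⟩
  | snd M ihM =>
    have hA : ∀ Γ (φ : Formula), IsQLE Γ (.snd M) φ → NeTerm (.snd M) := by
      intro Γ φ h
      cases h with | snd h => exact .snd (ihM.1 _ _ h)
    exact ⟨hA, fun Γ φ h => by cases h with | qle h => exact .ne (hA _ _ h)⟩
  | inl θ M ihM =>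
    refine ⟨fun _ _ h => (by cases h), fun Γ φ h => ?_⟩
    cases h with
    | qle h => cases h
    | inl h => exact .inl (ihM.2 _ _ h)
  | inr θ M ihM =>
    refine ⟨fun _ _ h => (by cases h), fun Γ φ h => ?_⟩
    cases h with
    | qle h => cases h
    | inr h => exact .inr (ihM.2 _ _ h)
  | case M x φ₁ N₁ y φ₂ N₂ ihM ih₁ ih₂ =>
    refine ⟨fun _ _ h => (by cases h), fun Γ φ h => ?_⟩
    cases h with
    | qle h => cases h
    | case hP h₁ h₂ => exact .case (ihM.1 _ _ hP) (ih₁.2 _ _ h₁) (ih₂.2 _ _ h₂)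
  | lam x θ M ihM =>
    refine ⟨fun _ _ h => (by cases h), fun Γ φ h => ?_⟩
    cases h with
    | qle h => cases h
    | lam h => exact .lam (ihM.2 _ _ h)
  | app M N ihM ihN =>
    have hA : ∀ Γ (φ : Formula), IsQLE Γ (.app M N) φ → NeTerm (.app M N) := by
      intro Γ φ h
      cases h with | app hP _ hN => exact .app (ihM.1 _ _ hP) (ihN.2 _ _ hN)
    exact ⟨hA, fun Γ φ h => by cases h with | qle h => exact .ne (hA _ _ h)⟩
  | tlam X M ihM =>
    refine ⟨fun _ _ h => (by cases h), fun Γ φ h => ?_⟩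
    cases h with
    | qle h => cases h
    | tlam h _ => exact .tlam (ihM.2 _ _ h)
  | tapp M Y ihM =>
    have hA : ∀ Γ (φ : Formula), IsQLE Γ (.tapp M Y) φ → NeTerm (.tapp M Y) := by
      intro Γ φ h
      cases h with | tapp h _ => exact .tapp (ihM.1 _ _ h)
    exact ⟨hA, fun Γ φ h => by cases h with | qle h => exact .ne (hA _ _ h)⟩
  | pack M Y X θ ihM =>
    refine ⟨fun _ _ h => (by cases h), fun Γ φ h => ?_⟩
    cases h with
    | qle h => cases h
    | pack h _ => exact .pack (ihM.2 _ _ h)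
  | lett x θ M X N ihM ihN =>
    refine ⟨fun _ _ h => (by cases h), fun Γ φ h => ?_⟩
    cases h with
    | qle h => cases h
    | lett hP hN _ _ => exact .lett (ihM.1 _ _ hP) (ihN.2 _ _ hN)
  | efq θ M ihM =>
    refine ⟨fun _ _ h => (by cases h), fun Γ φ h => ?_⟩
    cases h with
    | qle h => cases h
    | efq h => exact .efq (ihM.1 _ _ h)

/-- A good judgement: all context formulas and the conclusion formula are good. -/
def GoodJ (φt : Formula) (j : Ctx × Term × Formula) : Prop :=
  (∀ x ξ, (x, ξ) ∈ j.1 → Good φt ξ) ∧ Good φt j.2.2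

theorem goodCtx_cons {φt θ : Formula} {Γ : Ctx} {x₀ : ℕ}
    (hΓ : ∀ x ξ, (x, ξ) ∈ Γ → Good φt ξ) (hθ : Good φt θ) :
    ∀ x ξ, (x, ξ) ∈ (x₀, θ) :: Γ → Good φt ξ := by
  intro x ξ h
  rcases List.mem_cons.mp h with h | h
  · exact (Prod.mk.inj h).2 ▸ hθ
  · exact hΓ x ξ h

/-- The set of judgements occurring in a derivation. -/
def judgs : {Γ : Ctx} → {M : Term} → {φ : Formula} → Deriv Γ M φ → Set (Ctx × Term × Formula)
  | _, _, _, @Deriv.var Γ x φ _ => {(Γ, .var x, φ)}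
  | _, _, _, @Deriv.conjI Γ M N φ ψ d₁ d₂ =>
      insert (Γ, .pair M N, .conj φ ψ) (judgs d₁ ∪ judgs d₂)
  | _, _, _, @Deriv.conjE1 Γ M φ _ d => insert (Γ, .fst M, φ) (judgs d)
  | _, _, _, @Deriv.conjE2 Γ M _ ψ d => insert (Γ, .snd M, ψ) (judgs d)
  | _, _, _, @Deriv.disjI1 Γ M φ ψ d => insert (Γ, .inl (.disj φ ψ) M, .disj φ ψ) (judgs d)
  | _, _, _, @Deriv.disjI2 Γ N φ ψ d => insert (Γ, .inr (.disj φ ψ) N, .disj φ ψ) (judgs d)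
  | _, _, _, @Deriv.disjE Γ M x y φ₁ φ₂ N₁ N₂ ψ d d₁ d₂ =>
      insert (Γ, .case M x φ₁ N₁ y φ₂ N₂, ψ) (judgs d ∪ (judgs d₁ ∪ judgs d₂))
  | _, _, _, @Deriv.impI Γ x φ M ψ d => insert (Γ, .lam x φ M, .imp φ ψ) (judgs d)
  | _, _, _, @Deriv.impE Γ M N _ ψ d₁ d₂ => insert (Γ, .app M N, ψ) (judgs d₁ ∪ judgs d₂)
  | _, _, _, @Deriv.allI Γ M X φ d _ => insert (Γ, .tlam X M, .all X φ) (judgs d)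
  | _, _, _, @Deriv.allE Γ M X Y φ d _ => insert (Γ, .tapp M Y, φ.renameFree X Y) (judgs d)
  | _, _, _, @Deriv.exI Γ M X Y φ d _ => insert (Γ, .pack M Y X φ, .ex X φ) (judgs d)
  | _, _, _, @Deriv.exE Γ M N x X φ ψ d₁ d₂ _ _ =>
      insert (Γ, .lett x φ M X N, ψ) (judgs d₁ ∪ judgs d₂)
  | _, _, _, @Deriv.botE Γ M φ d => insert (Γ, .efq φ M, φ) (judgs d)

theorem self_mem_judgs : ∀ {Γ M φ} (d : Deriv Γ M φ), (Γ, M, φ) ∈ judgs d := by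
  intro Γ M φ d
  cases d <;> simp [judgs]

theorem inDeriv_mem_judgs {Γ M φ} {d : Deriv Γ M φ} {j} (h : InDeriv d j) : j ∈ judgs d := by
  induction h with
  | here d => exact self_mem_judgs d
  | conjI_l d₁ d₂ _ ih => exact Set.mem_insert_of_mem _ (Set.mem_union_left _ ih)
  | conjI_r d₁ d₂ _ ih => exact Set.mem_insert_of_mem _ (Set.mem_union_right _ ih)
  | conjE1_p d _ ih => exact Set.mem_insert_of_mem _ ih
  | conjE2_p d _ ih => exact Set.mem_insert_of_mem _ ih
  | disjI1_p d _ ih => exact Set.mem_insert_of_mem _ ih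
  | disjI2_p d _ ih => exact Set.mem_insert_of_mem _ ih
  | disjE_s d d₁ d₂ _ ih => exact Set.mem_insert_of_mem _ (Set.mem_union_left _ ih)
  | disjE_l d d₁ d₂ _ ih =>
      exact Set.mem_insert_of_mem _ (Set.mem_union_right _ (Set.mem_union_left _ ih))
  | disjE_r d d₁ d₂ _ ih =>
      exact Set.mem_insert_of_mem _ (Set.mem_union_right _ (Set.mem_union_right _ ih))
  | impI_p d _ ih => exact Set.mem_insert_of_mem _ ih
  | impE_l d₁ d₂ _ ih => exact Set.mem_insert_of_mem _ (Set.mem_union_left _ ih)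
  | impE_r d₁ d₂ _ ih => exact Set.mem_insert_of_mem _ (Set.mem_union_right _ ih)
  | allI_p d h _ ih => exact Set.mem_insert_of_mem _ ih
  | allE_p d h _ ih => exact Set.mem_insert_of_mem _ ih
  | exI_p d h _ ih => exact Set.mem_insert_of_mem _ ih
  | exE_l d₁ d₂ h₁ h₂ _ ih => exact Set.mem_insert_of_mem _ (Set.mem_union_left _ ih)
  | exE_r d₁ d₂ h₁ h₂ _ ih => exact Set.mem_insert_of_mem _ (Set.mem_union_right _ ih)
  | botE_p d _ ih => exact Set.mem_insert_of_mem _ ih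

/-- Main lemma: goodness propagates through derivations of normal terms. -/
theorem main_lemma {φt : Formula} :
    ∀ {Γ M ψ} (d : Deriv Γ M ψ),
      (∀ x ξ, (x, ξ) ∈ Γ → Good φt ξ) →
      ((NfTerm M → Good φt ψ → ∀ j ∈ judgs d, GoodJ φt j) ∧
       (NeTerm M → (∀ j ∈ judgs d, GoodJ φt j) ∧ Good φt ψ)) := by
  intro Γ M ψ d
  induction d with
  | @var Γ x θ hmem =>
    intro hΓ
    have hg := hΓ x θ hmem
    have key : ∀ j ∈ judgs (Deriv.var hmem), GoodJ φt j := by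
      intro j hj
      simp only [judgs, Set.mem_singleton_iff] at hj
      subst hj
      exact ⟨hΓ, hg⟩
    exact ⟨fun _ _ => key, fun _ => ⟨key, hg⟩⟩
  | conjI d₁ d₂ ih₁ ih₂ =>
    intro hΓ
    refine ⟨fun hnf hg j hj => ?_, fun hne => (by cases hne)⟩
    obtain ⟨hga, hgb⟩ := good_conj hg
    cases hnf with
    | ne h => cases h
    | pair h₁ h₂ =>
      simp only [judgs, Set.mem_insert_iff, Set.mem_union] at hj
      rcases hj with rfl | hj | hj
      · exact ⟨hΓ, hg⟩
      · exact (ih₁ hΓ).1 h₁ hga j hj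
      · exact (ih₂ hΓ).1 h₂ hgb j hj
  | @conjE1 Γ' M' θ₁ θ₂ d ih =>
    intro hΓ
    have key : NeTerm (.fst M') → (∀ j ∈ judgs (Deriv.conjE1 d), GoodJ φt j) ∧ Good φt θ₁ := by
      intro hne
      cases hne with
      | fst hP =>
        obtain ⟨hj, hg⟩ := (ih hΓ).2 hP
        refine ⟨fun j hj' => ?_, (good_conj hg).1⟩
        simp only [judgs, Set.mem_insert_iff] at hj'
        rcases hj' with rfl | hj'
        · exact ⟨hΓ, (good_conj hg).1⟩
        · exact hj j hj'
    exact ⟨fun hnf _ => (by cases hnf with | ne h => exact (key h).1), key⟩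
  | @conjE2 Γ' M' θ₁ θ₂ d ih =>
    intro hΓ
    have key : NeTerm (.snd M') → (∀ j ∈ judgs (Deriv.conjE2 d), GoodJ φt j) ∧ Good φt θ₂ := by
      intro hne
      cases hne with
      | snd hP =>
        obtain ⟨hj, hg⟩ := (ih hΓ).2 hP
        refine ⟨fun j hj' => ?_, (good_conj hg).2⟩
        simp only [judgs, Set.mem_insert_iff] at hj'
        rcases hj' with rfl | hj'
        · exact ⟨hΓ, (good_conj hg).2⟩
        · exact hj j hj'
    exact ⟨fun hnf _ => (by cases hnf with | ne h => exact (key h).1), key⟩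
  | disjI1 d ih =>
    intro hΓ
    refine ⟨fun hnf hg j hj => ?_, fun hne => (by cases hne)⟩
    cases hnf with
    | ne h => cases h
    | inl h₁ =>
      simp only [judgs, Set.mem_insert_iff] at hj
      rcases hj with rfl | hj
      · exact ⟨hΓ, hg⟩
      · exact (ih hΓ).1 h₁ (good_disj hg).1 j hj
  | disjI2 d ih =>
    intro hΓ
    refine ⟨fun hnf hg j hj => ?_, fun hne => (by cases hne)⟩
    cases hnf with
    | ne h => cases h
    | inr h₁ =>
      simp only [judgs, Set.mem_insert_iff] at hj
      rcases hj with rfl | hj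
      · exact ⟨hΓ, hg⟩
      · exact (ih hΓ).1 h₁ (good_disj hg).2 j hj
  | disjE d d₁ d₂ ih ih₁ ih₂ =>
    intro hΓ
    refine ⟨fun hnf hg j hj => ?_, fun hne => (by cases hne)⟩
    cases hnf with
    | ne h => cases h
    | case hP h₁ h₂ =>
      obtain ⟨hjP, hgd⟩ := (ih hΓ).2 hP
      obtain ⟨hg₁, hg₂⟩ := good_disj hgd
      simp only [judgs, Set.mem_insert_iff, Set.mem_union] at hj
      rcases hj with rfl | hj | hj | hj
      · exact ⟨hΓ, hg⟩
      · exact hjP j hj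
      · exact (ih₁ (goodCtx_cons hΓ hg₁)).1 h₁ hg j hj
      · exact (ih₂ (goodCtx_cons hΓ hg₂)).1 h₂ hg j hj
  | impI d ih =>
    intro hΓ
    refine ⟨fun hnf hg j hj => ?_, fun hne => (by cases hne)⟩
    cases hnf with
    | ne h => cases h
    | lam h₁ =>
      obtain ⟨hga, hgb⟩ := good_imp hg
      simp only [judgs, Set.mem_insert_iff] at hj
      rcases hj with rfl | hj
      · exact ⟨hΓ, hg⟩
      · exact (ih (goodCtx_cons hΓ hga)).1 h₁ hgb j hj
  | @impE Γ' M' N' θ₁ θ₂ d₁ d₂ ih₁ ih₂ =>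
    intro hΓ
    have key : NeTerm (.app M' N') →
        (∀ j ∈ judgs (Deriv.impE d₁ d₂), GoodJ φt j) ∧ Good φt θ₂ := by
      intro hne
      cases hne with
      | app hP hN =>
        obtain ⟨hjP, hg⟩ := (ih₁ hΓ).2 hP
        obtain ⟨hga, hgb⟩ := good_imp hg
        refine ⟨fun j hj => ?_, hgb⟩
        simp only [judgs, Set.mem_insert_iff, Set.mem_union] at hj
        rcases hj with rfl | hj | hj
        · exact ⟨hΓ, hgb⟩
        · exact hjP j hj
        · exact (ih₂ hΓ).1 hN hga j hj
    exact ⟨fun hnf _ => (by cases hnf with | ne h => exact (key h).1), key⟩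
  | allI d hX ih =>
    intro hΓ
    refine ⟨fun hnf hg j hj => ?_, fun hne => (by cases hne)⟩
    cases hnf with
    | ne h => cases h
    | tlam h₁ =>
      simp only [judgs, Set.mem_insert_iff] at hj
      rcases hj with rfl | hj
      · exact ⟨hΓ, hg⟩
      · exact (ih hΓ).1 h₁ (good_all_body hg) j hj
  | @allE Γ' M' X' Y' θ d hY ih =>
    intro hΓ
    have key : NeTerm (.tapp M' Y') →
        (∀ j ∈ judgs (Deriv.allE d hY), GoodJ φt j) ∧ Good φt (θ.renameFree X' Y') := by
      intro hne
      cases hne with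
      | tapp hP =>
        obtain ⟨hjP, hg⟩ := (ih hΓ).2 hP
        have hg' := good_all_inst hg hY
        refine ⟨fun j hj => ?_, hg'⟩
        simp only [judgs, Set.mem_insert_iff] at hj
        rcases hj with rfl | hj
        · exact ⟨hΓ, hg'⟩
        · exact hjP j hj
    exact ⟨fun hnf _ => (by cases hnf with | ne h => exact (key h).1), key⟩
  | exI d hY ih =>
    intro hΓ
    refine ⟨fun hnf hg j hj => ?_, fun hne => (by cases hne)⟩
    cases hnf with
    | ne h => cases h
    | pack h₁ =>
      simp only [judgs, Set.mem_insert_iff] at hj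
      rcases hj with rfl | hj
      · exact ⟨hΓ, hg⟩
      · exact (ih hΓ).1 h₁ (good_ex_inst hg hY) j hj
  | exE d₁ d₂ hX₁ hX₂ ih₁ ih₂ =>
    intro hΓ
    refine ⟨fun hnf hg j hj => ?_, fun hne => (by cases hne)⟩
    cases hnf with
    | ne h => cases h
    | lett hP hN =>
      obtain ⟨hjP, hgd⟩ := (ih₁ hΓ).2 hP
      have hgb := good_ex_body hgd
      simp only [judgs, Set.mem_insert_iff, Set.mem_union] at hj
      rcases hj with rfl | hj | hj
      · exact ⟨hΓ, hg⟩
      · exact hjP j hj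
      · exact (ih₂ (goodCtx_cons hΓ hgb)).1 hN hg j hj
  | botE d ih =>
    intro hΓ
    refine ⟨fun hnf hg j hj => ?_, fun hne => (by cases hne)⟩
    cases hnf with
    | ne h => cases h
    | efq hP =>
      obtain ⟨hjP, _⟩ := (ih hΓ).2 hP
      simp only [judgs, Set.mem_insert_iff] at hj
      rcases hj with rfl | hj
      · exact ⟨hΓ, hg⟩
      · exact hjP j hj

/-- **Subformula property for long normal proofs**: in a derivation of `⊢ M : φ`
with `M` in long normal form, every judgement `Γ ⊢ N : ψ` occurring in the
derivation is such that every formula `ξ` of `Γ`, as well as `ψ` itself, is of the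
form `ξ'[X₁:=Y₁,…,Xₙ:=Yₙ]` for some subformula `ξ'` of `φ` with
`FV(ξ') = {X₁,…,Xₙ}` and some first-order variables `Y₁,…,Yₙ`. -/
theorem subformula_property (φ : Formula) (M : Term)
    (d : Deriv [] M φ) (hlnf : IsLnf [] M φ) :
    ∀ (Γ : Ctx) (N : Term) (ψ : Formula), InDeriv d (Γ, N, ψ) →
      (∀ x ξ, (x, ξ) ∈ Γ →
        ∃ ξ' σ, Subformula ξ' φ ∧ ξ = Formula.renameAll σ ξ') ∧
      (∃ ψ' σ, Subformula ψ' φ ∧ ψ = Formula.renameAll σ ψ') := by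
  intro Γ N ψ hin
  have hnil : ∀ x ξ, (x, ξ) ∈ ([] : Ctx) → Good φ ξ := by intro _ _ h; cases h
  have h := (main_lemma (φt := φ) d hnil).1 ((term_nf M).2 _ _ hlnf) (good_self φ)
      (Γ, N, ψ) (inDeriv_mem_judgs hin)
  refine ⟨fun x ξ hx => ?_, ?_⟩
  · obtain ⟨ξ', σ, hs, he, _⟩ := h.1 x ξ hx
    exact ⟨ξ', σ, hs, he⟩
  · obtain ⟨ψ', σ, hs, he, _⟩ := h.2
    exact ⟨ψ', σ, hs, he⟩
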